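/- Nonnegativity of the limit from uniform entropy bounds: Let n≥1 be real. For ε>0 define f_ε(s)=max(s,0)ⁿ+ε and G_ε(s)=∫₁^s∫₁^r f_ε(t)^{−1} dt dr. Let A⊂ℝ be a measurable set of finite Lebesgue measure, let (ε_j) be a sequence of positive numbers with ε_j→0, and let v_j:A→ℝ be measurable functions converging almost everywhere on A to a function v, such that limsup_{j→∞} ∫_A G_{ε_j}(v_j(x)) dx < ∞. Then v(x) ≥ 0 for almost every x∈A. -/

import Mathlib

open MeasureTheory Real Set Filter

noncomputable section

/-- Lebesgue measure restricted to `Ω = (0,1)`. -/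
def muOmega : MeasureTheory.Measure ℝ := MeasureTheory.volume.restrict (Set.Ioo 0 1)

/-- Neumann eigenvalues `λ_k = k²π²` of `-d²/dx²` on `(0,1)`. -/
def lam (k : ℕ) : ℝ := (k : ℝ) ^ 2 * Real.pi ^ 2

/-- Neumann eigenfunctions `φ_0 = 1`, `φ_k = √2 cos(kπx)`. -/
def phiN (k : ℕ) (x : ℝ) : ℝ :=
  if k = 0 then 1 else Real.sqrt 2 * Real.cos (k * Real.pi * x)

/-- Derivatives of the eigenfunctions: `φ_k' (x) = -kπ √2 sin(kπx)`. -/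
def dphiN (k : ℕ) (x : ℝ) : ℝ :=
  if k = 0 then 0 else -(k * Real.pi) * (Real.sqrt 2 * Real.sin (k * Real.pi * x))

/-- Fourier (cosine) coefficients `c_k(u) = ∫₀¹ u φ_k`. -/
def coefN (u : ℝ → ℝ) (k : ℕ) : ℝ := ∫ x in Set.Ioo (0:ℝ) 1, u x * phiN k x

/-- Membership in `L²(0,1)`. -/
def MemL2 (u : ℝ → ℝ) : Prop := MeasureTheory.MemLp u 2 muOmega

/-- Convergence in `L²(0,1)` of a sequence of functions. -/
def TendstoL2 (F : ℕ → ℝ → ℝ) (f : ℝ → ℝ) : Prop :=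
  Filter.Tendsto (fun K => MeasureTheory.eLpNorm (fun x => f x - F K x) 2 muOmega)
    Filter.atTop (nhds 0)

/-- Membership in `H^s_N(0,1)`. -/
def MemHN (s : ℝ) (u : ℝ → ℝ) : Prop :=
  MemL2 u ∧ Summable (fun k : ℕ => coefN u k ^ 2 * (1 + lam k ^ s))

/-- The squared `H^s_N` norm. -/
def normHNSq (s : ℝ) (u : ℝ → ℝ) : ℝ := ∑' k : ℕ, coefN u k ^ 2 * (1 + lam k ^ s)

/-- The squared homogeneous `Ḣ^s_N` seminorm. -/
def homSq (s : ℝ) (u : ℝ → ℝ) : ℝ := ∑' k : ℕ, coefN u (k+1) ^ 2 * lam (k+1) ^ s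

/-- `IsI α u w` : `w` is (a representative of) the `L²` function
`I(u) = -(-Δ)^{α/2} u`, i.e. the partial sums `-∑_{k=1}^K c_k(u) λ_k^{α/2} φ_k`
converge to `w` in `L²(0,1)`. -/
def IsI (α : ℝ) (u w : ℝ → ℝ) : Prop :=
  MemL2 w ∧
  TendstoL2 (fun K x => -∑ k ∈ Finset.Icc 1 K, coefN u k * lam k ^ (α/2) * phiN k x) w

/-- The spectral operator `I` defined pointwise by its series (used for smooth data). -/
def Ipt (α : ℝ) (u : ℝ → ℝ) (x : ℝ) : ℝ :=
  -∑' k : ℕ, coefN u (k+1) * lam (k+1) ^ (α/2) * phiN (k+1) x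

/-- `v` is the weak (distributional) derivative of `u` on `(0,1)`. -/
def IsWeakDeriv (u v : ℝ → ℝ) : Prop :=
  ∀ ψ : ℝ → ℝ, ContDiff ℝ (⊤ : ℕ∞) ψ → HasCompactSupport ψ → tsupport ψ ⊆ Set.Ioo 0 1 →
    ∫ x in Set.Ioo (0:ℝ) 1, u x * deriv ψ x = -∫ x in Set.Ioo (0:ℝ) 1, v x * ψ x

/-- The entropy function `G(s) = ∫₁^s ∫₁^r t^{-n} dt dr` (for `s > 0`). -/
def Gent (n s : ℝ) : ℝ := ∫ r in (1:ℝ)..s, ∫ t in (1:ℝ)..r, t ^ (-n)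

/-- The extended-valued entropy, `+∞` for `s < 0` (and at `s = 0` when `n ≥ 2`). -/
def GentE (n s : ℝ) : ENNReal :=
  if 0 < s ∨ (s = 0 ∧ n < 2) then ENNReal.ofReal (Gent n s) else ⊤

/-- The regularization `f_ε(s) = (s₊)ⁿ + ε`. -/
def fEps (n ε s : ℝ) : ℝ := max s 0 ^ n + ε

/-- The regularized entropy `G_ε(s) = ∫₁^s ∫₁^r f_ε(t)⁻¹ dt dr`. -/
def GEps (n ε s : ℝ) : ℝ := ∫ r in (1:ℝ)..s, ∫ t in (1:ℝ)..r, (fEps n ε t)⁻¹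

/-- Space-time test functions on `[0,T]×[0,1]`: smooth, vanishing for `t` near `T`,
with vanishing spatial derivative on the lateral boundary. -/
def IsTestST (T : ℝ) (φ : ℝ → ℝ → ℝ) : Prop :=
  ContDiff ℝ (⊤ : ℕ∞) (fun p : ℝ × ℝ => φ p.1 p.2) ∧
  (∃ T' < T, ∀ t ≥ T', ∀ x, φ t x = 0) ∧
  (∀ t, deriv (φ t) 0 = 0 ∧ deriv (φ t) 1 = 0)

/-- Test functions compactly supported in the open cylinder `Q = (0,T)×(0,1)`. -/
def IsTestQ (T : ℝ) (ψ : ℝ → ℝ → ℝ) : Prop :=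
  ContDiff ℝ (⊤ : ℕ∞) (fun p : ℝ × ℝ => ψ p.1 p.2) ∧
  HasCompactSupport (fun p : ℝ × ℝ => ψ p.1 p.2) ∧
  tsupport (fun p : ℝ × ℝ => ψ p.1 p.2) ⊆ Set.Ioo 0 T ×ˢ Set.Ioo 0 1


namespace NonnegEntropyAux
variable {n ε : ℝ}
lemma fEps_pos (hε : 0 < ε) (t : ℝ) : 0 < fEps n ε t :=
  add_pos_of_nonneg_of_pos (Real.rpow_nonneg (le_max_right t 0) n) hε
lemma fEps_cont (hn : 1 ≤ n) : Continuous (fEps n ε) :=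
  ((continuous_id.max continuous_const).rpow_const
    (fun x => Or.inr (by linarith))).add continuous_const
lemma g_cont (hn : 1 ≤ n) (hε : 0 < ε) : Continuous (fun t => (fEps n ε t)⁻¹) :=
  (fEps_cont hn).inv₀ fun t => (fEps_pos hε t).ne'
lemma g_eq (hn : 1 ≤ n) {t : ℝ} (ht : t ≤ 0) : (fEps n ε t)⁻¹ = ε⁻¹ := by
  simp [fEps, max_eq_right ht, Real.zero_rpow (by linarith : n ≠ 0)]
set_option maxHeartbeats 2000000 in
lemma GEps_continuous' (hn : 1 ≤ n) (hε : 0 < ε) : Continuous (GEps n ε) := by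
  have hg := g_cont (n := n) (ε := ε) hn hε
  have hF : Continuous (fun r => ∫ t in (1:ℝ)..r, (fEps n ε t)⁻¹) :=
    intervalIntegral.continuous_primitive (fun a b => hg.intervalIntegrable a b) 1
  exact intervalIntegral.continuous_primitive (fun a b => hF.intervalIntegrable a b) 1

lemma GEps_lower' (hn : 1 ≤ n) (hε : 0 < ε) {c s : ℝ} (hc : 0 < c) (hs : s ≤ -c) :
    c ^ 2 / (2 * ε) ≤ GEps n ε s := by
  have hgc : Continuous (fun t => (fEps n ε t)⁻¹) := g_cont hn hε
  have hgnn : ∀ t, 0 ≤ (fEps n ε t)⁻¹ := fun t => inv_nonneg.mpr (fEps_pos hε t).le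
  have hHc : Continuous (fun r => ∫ t in r..(1:ℝ), (fEps n ε t)⁻¹) := by
    have h0 : Continuous (fun r => ∫ t in (1:ℝ)..r, (fEps n ε t)⁻¹) :=
      intervalIntegral.continuous_primitive (fun a b => hgc.intervalIntegrable a b) 1
    exact h0.neg.congr fun r => (intervalIntegral.integral_symm 1 r).symm
  have hGE : GEps n ε s = ∫ r in s..(1:ℝ), ∫ t in r..(1:ℝ), (fEps n ε t)⁻¹ := by
    have h1 : (fun r => ∫ t in (1:ℝ)..r, (fEps n ε t)⁻¹)
        = fun r => -∫ t in r..(1:ℝ), (fEps n ε t)⁻¹ := by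
      funext r; exact intervalIntegral.integral_symm r 1
    rw [GEps, h1, intervalIntegral.integral_neg, intervalIntegral.integral_symm, neg_neg]
  have hs1 : s ≤ 1 := by linarith
  have hs0 : s ≤ 0 := by linarith
  have hHlb : ∀ r ∈ Icc s 1, ε⁻¹ * max (-r) 0 ≤ ∫ t in r..(1:ℝ), (fEps n ε t)⁻¹ := by
    intro r hr
    rcases le_or_gt r 0 with h0 | h0
    · have hsplit : (∫ t in r..(0:ℝ), (fEps n ε t)⁻¹) + ∫ t in (0:ℝ)..1, (fEps n ε t)⁻¹
          = ∫ t in r..(1:ℝ), (fEps n ε t)⁻¹ :=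
        intervalIntegral.integral_add_adjacent_intervals (hgc.intervalIntegrable _ _)
          (hgc.intervalIntegrable _ _)
      have h2 : (∫ t in r..(0:ℝ), (fEps n ε t)⁻¹) = -r * ε⁻¹ := by
        rw [intervalIntegral.integral_congr (g := fun _ => ε⁻¹) (fun t ht => by
          rw [Set.uIcc_of_le h0] at ht; exact g_eq hn ht.2)]
        simp [smul_eq_mul]
      have h3 : (0:ℝ) ≤ ∫ t in (0:ℝ)..1, (fEps n ε t)⁻¹ :=
        intervalIntegral.integral_nonneg zero_le_one fun t _ => hgnn t
      have hφr : ε⁻¹ * max (-r) 0 = -r * ε⁻¹ := by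
        rw [max_eq_left (by linarith : (0:ℝ) ≤ -r)]; ring
      rw [hφr]; linarith
    · have hφr : ε⁻¹ * max (-r) 0 = 0 := by
        rw [max_eq_right (by linarith : -r ≤ 0)]; ring
      rw [hφr]
      exact intervalIntegral.integral_nonneg hr.2 fun t _ => hgnn t
  have hφc : Continuous (fun r : ℝ => ε⁻¹ * max (-r) 0) :=
    continuous_const.mul (continuous_neg.max continuous_const)
  have hmono : (∫ r in s..(1:ℝ), ε⁻¹ * max (-r) 0)
      ≤ ∫ r in s..(1:ℝ), ∫ t in r..(1:ℝ), (fEps n ε t)⁻¹ :=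
    intervalIntegral.integral_mono_on hs1 (hφc.intervalIntegrable _ _)
      (hHc.intervalIntegrable _ _) hHlb
  have hφint : (∫ r in s..(1:ℝ), ε⁻¹ * max (-r) 0) = ε⁻¹ * (s ^ 2 / 2) := by
    have hsplit : (∫ r in s..(0:ℝ), ε⁻¹ * max (-r) 0) + ∫ r in (0:ℝ)..1, ε⁻¹ * max (-r) 0
        = ∫ r in s..(1:ℝ), ε⁻¹ * max (-r) 0 :=
      intervalIntegral.integral_add_adjacent_intervals (hφc.intervalIntegrable _ _)
        (hφc.intervalIntegrable _ _)
    have h01 : (∫ r in (0:ℝ)..1, ε⁻¹ * max (-r) 0) = 0 := by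
      rw [intervalIntegral.integral_congr (g := fun _ => (0:ℝ)) (fun r hr => by
        rw [Set.uIcc_of_le zero_le_one] at hr
        rw [max_eq_right (by linarith [hr.1] : -r ≤ 0)]; ring)]
      simp
    have hs0' : (∫ r in s..(0:ℝ), ε⁻¹ * max (-r) 0) = ε⁻¹ * (s ^ 2 / 2) := by
      rw [intervalIntegral.integral_congr (g := fun r => ε⁻¹ * (-r)) (fun r hr => by
        rw [Set.uIcc_of_le hs0] at hr
        rw [max_eq_left (by linarith [hr.2] : (0:ℝ) ≤ -r)])]
      rw [intervalIntegral.integral_const_mul, intervalIntegral.integral_neg, integral_id]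
      ring
    linarith
  rw [hGE]
  have hcs : c ^ 2 ≤ s ^ 2 := by nlinarith
  have hd : ε⁻¹ * (s ^ 2 / 2) - c ^ 2 / (2 * ε) = (s ^ 2 - c ^ 2) / (2 * ε) := by
    field_simp
  have hd2 : (0:ℝ) ≤ (s ^ 2 - c ^ 2) / (2 * ε) := div_nonneg (by linarith) (by positivity)
  linarith
end NonnegEntropyAux

/-- **Nonnegativity of the limit from uniform entropy bounds**: if `ε_j → 0⁺`,
`v_j → v` a.e. on a set `A` of finite measure and `limsup_j ∫_A G_{ε_j}(v_j) < ∞`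
(i.e. the entropy integrals are eventually bounded), then `v ≥ 0` a.e. on `A`. -/
theorem nonneg_limit_from_entropy (n : ℝ) (hn : 1 ≤ n)
    (A : Set ℝ) (hA : MeasurableSet A) (hAfin : MeasureTheory.volume A < ⊤)
    (ε : ℕ → ℝ) (hεpos : ∀ j, 0 < ε j) (hε0 : Filter.Tendsto ε Filter.atTop (nhds 0))
    (v : ℕ → ℝ → ℝ) (hv : ∀ j, Measurable (v j)) (vlim : ℝ → ℝ)
    (hconv : ∀ᵐ x ∂(MeasureTheory.volume.restrict A),
      Filter.Tendsto (fun j => v j x) Filter.atTop (nhds (vlim x)))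
    (hbound : ∃ B : ENNReal, B < ⊤ ∧ ∀ᶠ j in Filter.atTop,
      ∫⁻ x in A, ENNReal.ofReal (GEps n (ε j) (v j x)) ≤ B) :
    ∀ᵐ x ∂(MeasureTheory.volume.restrict A), 0 ≤ vlim x := by
  obtain ⟨B, hB, hev⟩ := hbound
  have hFm : ∀ j, Measurable (fun x => ENNReal.ofReal (GEps n (ε j) (v j x))) := fun j =>
    ENNReal.measurable_ofReal.comp
      (((NonnegEntropyAux.GEps_continuous' hn (hεpos j)).measurable).comp (hv j))
  have hfatou : ∫⁻ x in A,
      Filter.liminf (fun j => ENNReal.ofReal (GEps n (ε j) (v j x))) Filter.atTop ≤ B :=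
    calc ∫⁻ x in A, Filter.liminf (fun j => ENNReal.ofReal (GEps n (ε j) (v j x))) Filter.atTop
        ≤ Filter.liminf (fun j => ∫⁻ x in A, ENNReal.ofReal (GEps n (ε j) (v j x)))
            Filter.atTop := lintegral_liminf_le hFm
      _ ≤ Filter.limsup (fun j => ∫⁻ x in A, ENNReal.ofReal (GEps n (ε j) (v j x)))
            Filter.atTop := liminf_le_limsup
      _ ≤ B := limsup_le_of_le (by isBoundedDefault) hev
  have hae : ∀ᵐ x ∂(MeasureTheory.volume.restrict A),
      Filter.liminf (fun j => ENNReal.ofReal (GEps n (ε j) (v j x))) Filter.atTop < ⊤ :=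
    ae_lt_top (Measurable.liminf hFm) (lt_of_le_of_lt hfatou hB).ne
  filter_upwards [hconv, hae] with x hx hfin
  by_contra hneg
  push_neg at hneg
  set c : ℝ := -vlim x / 2 with hcdef
  have hcpos : 0 < c := by simp only [hcdef]; linarith
  have hevx : ∀ᶠ j in Filter.atTop, v j x ≤ -c :=
    (hx.eventually_lt_const (by simp only [hcdef]; linarith : vlim x < -c)).mono
      fun j hj => hj.le
  have hlow : ∀ᶠ j in Filter.atTop,
      ENNReal.ofReal (c ^ 2 / (2 * ε j)) ≤ ENNReal.ofReal (GEps n (ε j) (v j x)) :=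
    hevx.mono fun j hj => ENNReal.ofReal_le_ofReal (NonnegEntropyAux.GEps_lower' hn (hεpos j) hcpos hj)
  have htop : Filter.Tendsto (fun j => ENNReal.ofReal (c ^ 2 / (2 * ε j)))
      Filter.atTop (nhds ⊤) := by
    apply ENNReal.tendsto_ofReal_atTop.comp
    have h1 : Filter.Tendsto (fun j => (ε j)⁻¹) Filter.atTop Filter.atTop :=
      Filter.Tendsto.inv_tendsto_nhdsGT_zero
        (tendsto_nhdsWithin_of_tendsto_nhds_of_eventually_within _ hε0
          (Filter.Eventually.of_forall fun j => hεpos j))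
    have h2 : Filter.Tendsto (fun j => c ^ 2 / 2 * (ε j)⁻¹) Filter.atTop Filter.atTop :=
      h1.const_mul_atTop (by positivity)
    exact h2.congr fun j => by field_simp
  have hlimtop : Filter.liminf (fun j => ENNReal.ofReal (GEps n (ε j) (v j x)))
      Filter.atTop = ⊤ := by
    refine top_le_iff.mp ?_
    calc (⊤ : ENNReal)
        = Filter.liminf (fun j => ENNReal.ofReal (c ^ 2 / (2 * ε j))) Filter.atTop :=
          htop.liminf_eq.symm
      _ ≤ _ := liminf_le_liminf hlow
  rw [hlimtop] at hfin
  exact absurd hfin (lt_irrefl ⊤)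

end
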